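/- Let H be a self-adjoint operator on a Hilbert space, Q its quadratic form, and P₁,…,P₃ operators with Q(u) = Σⱼ ‖Pⱼu‖² and H = ΣⱼPⱼ*Pⱼ on suitable domains. If Hψ = λψ and a is an operator such that all terms are defined, then λ‖aψ‖² = Q(aψ) + Σⱼ ⟨Pⱼψ, [Pⱼ, a*] aψ⟩ + Σⱼ ⟨[a, Pⱼ]ψ, Pⱼ(aψ)⟩. -/

import Mathlib

open scoped InnerProductSpace ComplexConjugate

section

variable {𝕜 E : Type*} [RCLike 𝕜] [NormedAddCommGroup E] [InnerProductSpace 𝕜 E]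

theorem inner_ofReal_smul_apply_adjoint {a astar : E → E} (ψ : E) (r : ℝ)
    (hadj : ⟪a ψ, a ψ⟫_𝕜 = ⟪ψ, astar (a ψ)⟫_𝕜) :
    ⟪(r : 𝕜) • ψ, astar (a ψ)⟫_𝕜 = (r : 𝕜) * ((‖a ψ‖ ^ 2 : ℝ) : 𝕜) := by
  rw [inner_smul_left, ← hadj, RCLike.conj_ofReal, inner_self_eq_norm_sq_to_K, RCLike.ofReal_pow]

/-- Splitting `⟪x, y⟫` through `a* z`: with `x = Pψ`, `y = P a* aψ`, `z = P aψ` this produces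
the two commutator terms `[P, a*] aψ` and `[a, P] ψ`. -/
theorem inner_eq_norm_sq_add_inner_sub_add_inner_sub {a astar : E → E} (x y z : E)
    (hadj : ⟪a x, z⟫_𝕜 = ⟪x, astar z⟫_𝕜) :
    ⟪x, y⟫_𝕜 = ((‖z‖ ^ 2 : ℝ) : 𝕜) + ⟪x, y - astar z⟫_𝕜 + ⟪a x - z, z⟫_𝕜 := by
  rw [inner_sub_right, inner_sub_left, hadj, inner_self_eq_norm_sq_to_K, RCLike.ofReal_pow]
  ring

end

/-- the commutator formula (Lemma `new-IMS`): if `H = Σⱼ Pⱼ*Pⱼ` (weakly),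
`Q(u) = Σⱼ ‖Pⱼu‖²`, `a*` is the formal adjoint of `a`, and `Hψ = λψ`, then
`λ‖aψ‖² = Q(aψ) + Σⱼ ⟨Pⱼψ, [Pⱼ, a*] aψ⟩ + Σⱼ ⟨[a, Pⱼ]ψ, Pⱼ(aψ)⟩`. -/
theorem stmt6 {E : Type*} [NormedAddCommGroup E] [InnerProductSpace ℂ E]
    (H : E →ₗ[ℂ] E) (P : Fin 3 → E →ₗ[ℂ] E) (a astar : E →ₗ[ℂ] E)
    (hH : ∀ u v : E, ⟪H u, v⟫_ℂ = ∑ j : Fin 3, ⟪P j u, P j v⟫_ℂ)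
    (hadj : ∀ u v : E, ⟪a u, v⟫_ℂ = ⟪u, astar v⟫_ℂ)
    (ψ : E) (lam : ℝ) (hψ : H ψ = (lam : ℂ) • ψ) :
    (lam : ℂ) * ((‖a ψ‖ ^ 2 : ℝ) : ℂ)
      = ((∑ j : Fin 3, ‖P j (a ψ)‖ ^ 2 : ℝ) : ℂ)
        + ∑ j : Fin 3, ⟪P j ψ, P j (astar (a ψ)) - astar (P j (a ψ))⟫_ℂ
        + ∑ j : Fin 3, ⟪a (P j ψ) - P j (a ψ), P j (a ψ)⟫_ℂ := by
  calc (lam : ℂ) * ((‖a ψ‖ ^ 2 : ℝ) : ℂ)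
      = ⟪H ψ, astar (a ψ)⟫_ℂ := by
        rw [hψ]
        exact (inner_ofReal_smul_apply_adjoint ψ lam (hadj ψ (a ψ))).symm
    _ = ∑ j : Fin 3, ⟪P j ψ, P j (astar (a ψ))⟫_ℂ := hH _ _
    _ = ∑ j : Fin 3, (((‖P j (a ψ)‖ ^ 2 : ℝ) : ℂ)
          + ⟪P j ψ, P j (astar (a ψ)) - astar (P j (a ψ))⟫_ℂ
          + ⟪a (P j ψ) - P j (a ψ), P j (a ψ)⟫_ℂ) :=
        Finset.sum_congr rfl fun j _ =>
          inner_eq_norm_sq_add_inner_sub_add_inner_sub _ _ _ (hadj _ _)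
    _ = _ := by
        rw [Finset.sum_add_distrib, Finset.sum_add_distrib, Complex.ofReal_sum]
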